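/- arXiv:1409.2582 — 5 statements merged into one kernel-verified Lean document; each statement's English description precedes it below -/
import Mathlib

section
/- For every real ρ with 0 ≤ ρ < 1 and every real θ₁, (1/(2π)) · ∫_{-π}^{π} (1 − ρ²)/((ρ² + 1) − 2ρ·cos(θ − θ₁)) dθ = 1; the value of this integral is independent of ρ. -/
/-!
`θ ↦ θ + 2 arctan (ρ sin θ / (1 - ρ cos θ))` is a primitive of the kernel
`(1 - ρ²) / (1 + ρ² - 2ρ cos θ)` on the whole real line, and it increases by exactly `2π` over a
period; after translating by `θ₁`, the integral over `[-π, π]` is therefore `2π`.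
-/

open Real intervalIntegral

namespace PoissonKernel

variable {ρ : ℝ}

theorem one_sub_mul_cos_pos (hρ : |ρ| < 1) (x : ℝ) : 0 < 1 - ρ * cos x := by
  have : |ρ * cos x| ≤ |ρ| := by
    rw [abs_mul]
    exact mul_le_of_le_one_right (abs_nonneg ρ) (abs_cos_le_one x)
  linarith [le_abs_self (ρ * cos x)]

theorem denom_eq_sq_add_sq (ρ x : ℝ) :
    (ρ ^ 2 + 1) - 2 * ρ * cos x = (1 - ρ * cos x) ^ 2 + (ρ * sin x) ^ 2 := by
  linear_combination (-ρ ^ 2) * sin_sq_add_cos_sq x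

theorem denom_pos (hρ : |ρ| < 1) (x : ℝ) : 0 < (ρ ^ 2 + 1) - 2 * ρ * cos x := by
  rw [denom_eq_sq_add_sq]
  have := one_sub_mul_cos_pos hρ x
  positivity

/-- Unlike the textbook primitive `2 arctan ((1 + ρ) / (1 - ρ) * tan (θ / 2))`, this one is smooth on
all of `ℝ`, because `1 - ρ cos θ` never vanishes. -/
noncomputable def primitive (ρ θ : ℝ) : ℝ :=
  θ + 2 * arctan (ρ * sin θ / (1 - ρ * cos θ))

theorem primitive_add_two_pi (ρ θ : ℝ) : primitive ρ (θ + 2 * π) = primitive ρ θ + 2 * π := by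
  simp only [primitive, sin_add_two_pi, cos_add_two_pi]; ring

theorem hasDerivAt_primitive (hρ : |ρ| < 1) (x : ℝ) :
    HasDerivAt (primitive ρ) ((1 - ρ ^ 2) / ((ρ ^ 2 + 1) - 2 * ρ * cos x)) x := by
  have hc := (one_sub_mul_cos_pos hρ x).ne'
  have hD := (denom_pos hρ x).ne'
  have hq : HasDerivAt (fun y => ρ * sin y / (1 - ρ * cos y))
      ((ρ * cos x * (1 - ρ * cos x) - ρ * sin x * (ρ * sin x)) / (1 - ρ * cos x) ^ 2) x := by
    refine ((hasDerivAt_sin x).const_mul ρ).div ?_ hc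
    simpa using ((hasDerivAt_cos x).const_mul ρ).const_sub 1
  refine ((hasDerivAt_id x).add (hq.arctan.const_mul 2)).congr_deriv ?_
  rw [denom_eq_sq_add_sq] at hD ⊢
  field_simp
  linear_combination (-ρ ^ 2) * sin_sq_add_cos_sq x

theorem integral_period_eq_two_pi (hρ : |ρ| < 1) (a : ℝ) :
    ∫ θ in a..a + 2 * π, (1 - ρ ^ 2) / ((ρ ^ 2 + 1) - 2 * ρ * cos θ) = 2 * π := by
  have hcont : Continuous fun θ => (1 - ρ ^ 2) / ((ρ ^ 2 + 1) - 2 * ρ * cos θ) :=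
    continuous_const.div (by fun_prop) fun θ => (denom_pos hρ θ).ne'
  rw [integral_eq_sub_of_hasDerivAt (fun θ _ => hasDerivAt_primitive hρ θ)
    (hcont.intervalIntegrable _ _), primitive_add_two_pi]
  ring

end PoissonKernel

/-- The Poisson kernel integrates to one: for every `0 ≤ ρ < 1` and every `θ₁`,
`(1/(2π)) ∫_{-π}^{π} (1 − ρ²)/((ρ² + 1) − 2ρ cos(θ − θ₁)) dθ = 1`,
independently of `ρ`. -/
theorem poisson_kernel_integral_eq_one
    (ρ : ℝ) (hρ0 : 0 ≤ ρ) (hρ1 : ρ < 1) (θ₁ : ℝ) :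
    (1 / (2 * Real.pi)) *
      ∫ θ in (-Real.pi)..Real.pi,
        (1 - ρ ^ 2) / ((ρ ^ 2 + 1) - 2 * ρ * Real.cos (θ - θ₁)) = 1 := by
  have hρ : |ρ| < 1 := abs_lt.mpr ⟨by linarith, hρ1⟩
  have hperiod : π - θ₁ = (-π - θ₁) + 2 * π := by ring
  rw [integral_comp_sub_right (fun θ => (1 - ρ ^ 2) / ((ρ ^ 2 + 1) - 2 * ρ * cos θ)), hperiod,
    PoissonKernel.integral_period_eq_two_pi hρ]
  field_simp
end

section
/- Let γ : ℂ → ℂ be analytic on the open unit disk {z : |z| < 1}, let θ₁ be real, and suppose the radial limit lim_{r → 1⁻} γ(r·e^{iθ₁}) exists and equals L ∈ ℂ. Then lim_{ρ → 1⁻} (1/(2π)) · ∫_{-π}^{π} γ(ρ·e^{iθ}) · (1 − ρ²)/((ρ² + 1) − 2ρ·cos(θ − θ₁)) dθ = L. That is, in the limit ρ → 1 the Poisson kernel acts on boundary values of inner analytic functions as the Dirac delta centered at θ₁. -/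
open Complex Real Filter Topology intervalIntegral

/-!
On the circle `|z| = ρ`, the kernel `(1 - ρ²) / (1 + ρ² - 2ρ cos (θ - θ₁))` is exactly the Poisson
kernel of the disk of radius `ρ` at the point `ρ² e^{iθ₁}`. So the Poisson integral formula on that
disk shows that the integral at radius `ρ` equals `γ (ρ² e^{iθ₁})`, and as `ρ → 1⁻` so does `ρ² → 1⁻`:
the radial limit finishes the proof.
-/

open Metric Set

theorem Real.circleAverage_eq_integral_neg_pi_pi {E : Type*} [NormedAddCommGroup E]
    [NormedSpace ℝ E] (f : ℂ → E) (c : ℂ) (R : ℝ) :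
    circleAverage f c R = (2 * π)⁻¹ • ∫ θ in -π..π, f (circleMap c R θ) := by
  have hper : (fun θ ↦ f (circleMap c R θ)).Periodic (2 * π) :=
    fun θ ↦ by simp [periodic_circleMap c R θ]
  rw [circleAverage_def, ← zero_add (2 * π), ← hper.intervalIntegral_add_eq (-π) 0,
    show -π + 2 * π = π by ring]

theorem poissonKernel_zero_mul_exp_circleMap (R r θ φ : ℝ) :
    poissonKernel 0 (r * exp (φ * I)) (circleMap 0 R θ)
      = (R ^ 2 - r ^ 2) / (R ^ 2 + r ^ 2 - 2 * R * r * Real.cos (θ - φ)) := by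
  simp only [poissonKernel_def, sub_zero, circleMap_zero, Complex.sq_norm, Complex.normSq_apply,
    Complex.sub_re, Complex.sub_im, Complex.mul_re, Complex.mul_im, Complex.ofReal_re,
    Complex.ofReal_im, Complex.exp_ofReal_mul_I_re, Complex.exp_ofReal_mul_I_im, Real.cos_sub]
  congr 1
  · linear_combination R ^ 2 * Real.sin_sq_add_cos_sq θ - r ^ 2 * Real.sin_sq_add_cos_sq φ
  · linear_combination R ^ 2 * Real.sin_sq_add_cos_sq θ + r ^ 2 * Real.sin_sq_add_cos_sq φ

theorem poissonKernel_sq_mul_exp_circleMap {ρ : ℝ} (hρ : ρ ≠ 0) (θ θ₁ : ℝ) :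
    poissonKernel 0 ((ρ ^ 2 : ℝ) * exp (θ₁ * I)) (circleMap 0 ρ θ)
      = (1 - ρ ^ 2) / ((ρ ^ 2 + 1) - 2 * ρ * Real.cos (θ - θ₁)) := by
  rw [poissonKernel_zero_mul_exp_circleMap, ← mul_div_mul_left (1 - ρ ^ 2) _ (pow_ne_zero 2 hρ)]
  congr 1 <;> ring

theorem poisson_integral_eq_apply_sq_mul_exp {γ : ℂ → ℂ}
    (hγ : DifferentiableOn ℂ γ (ball (0 : ℂ) 1)) (θ₁ : ℝ) {ρ : ℝ} (hρ : ρ ∈ Ioo 0 1) :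
    ((1 / (2 * π) : ℝ) : ℂ) *
        ∫ θ in -π..π, γ ((ρ : ℂ) * exp (θ * I)) *
          (((1 - ρ ^ 2) / ((ρ ^ 2 + 1) - 2 * ρ * Real.cos (θ - θ₁)) : ℝ) : ℂ)
      = γ ((ρ ^ 2 : ℝ) * exp (θ₁ * I)) := by
  obtain ⟨hρ₀, hρ₁⟩ := hρ
  have hdisk : DiffContOnCl ℂ γ (ball 0 ρ) :=
    hγ.diffContOnCl_ball (closedBall_subset_ball hρ₁)
  have hw : ((ρ ^ 2 : ℝ) : ℂ) * exp (θ₁ * I) ∈ ball (0 : ℂ) ρ := by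
    rw [mem_ball_zero_iff, norm_mul, norm_exp_ofReal_mul_I, mul_one, norm_real,
      Real.norm_of_nonneg (by positivity)]
    nlinarith
  rw [← hdisk.circleAverage_poissonKernel_smul hw, circleAverage_eq_integral_neg_pi_pi,
    one_div, ← real_smul]
  congr 1
  refine integral_congr fun θ _ ↦ ?_
  rw [Pi.smul_apply', poissonKernel_sq_mul_exp_circleMap hρ₀.ne', real_smul, circleMap_zero,
    mul_comm]

theorem tendsto_sq_nhdsWithin_Ioo_zero_one :
    Tendsto (fun ρ : ℝ ↦ ρ ^ 2) (𝓝[Ioo 0 1] 1) (𝓝[Ioo 0 1] 1) :=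
  tendsto_nhdsWithin_of_tendsto_nhds_of_eventually_within _
    (by simpa using ((continuous_pow 2).tendsto (1 : ℝ)).mono_left nhdsWithin_le_nhds)
    (eventually_nhdsWithin_of_forall fun _ ⟨h₀, h₁⟩ ↦ ⟨by positivity, by nlinarith⟩)

/-- The Poisson kernel acts as a Dirac delta on boundary values of analytic functions:
if `γ` is analytic on the open unit disk and the radial limit of `γ` at `e^{iθ₁}`
exists and equals `L`, then the Poisson integrals of `γ` at radius `ρ`, centered at
`θ₁`, tend to `L` as `ρ → 1⁻` (within `(0,1)`). -/
theorem poisson_integral_tendsto_radial_limit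
    (γ : ℂ → ℂ)
    (hγ : DifferentiableOn ℂ γ (Metric.ball (0 : ℂ) 1))
    (θ₁ : ℝ) (L : ℂ)
    (hL : Tendsto (fun r : ℝ => γ ((r : ℂ) * Complex.exp (θ₁ * Complex.I)))
      (nhdsWithin 1 (Set.Ioo (0 : ℝ) 1)) (nhds L)) :
    Tendsto (fun ρ : ℝ =>
        ((1 / (2 * Real.pi) : ℝ) : ℂ) *
          ∫ θ in (-Real.pi)..Real.pi,
            γ ((ρ : ℂ) * Complex.exp (θ * Complex.I)) *
              (((1 - ρ ^ 2) / ((ρ ^ 2 + 1) - 2 * ρ * Real.cos (θ - θ₁)) : ℝ) : ℂ))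
      (nhdsWithin 1 (Set.Ioo (0 : ℝ) 1)) (nhds L) := by
  refine (hL.comp tendsto_sq_nhdsWithin_Ioo_zero_one).congr' ?_
  filter_upwards [self_mem_nhdsWithin] with ρ hρ
  exact (poisson_integral_eq_apply_sq_mul_exp hγ θ₁ hρ).symm
end

section
/- Let a : ℕ → ℝ. Suppose there exist a real ρ > 1 and a real θ₀ such that both real series Σ_{k=1}^∞ a_k·ρ^k·cos(kθ₀) and Σ_{k=1}^∞ a_k·ρ^k·sin(kθ₀) converge. Then Σ_{k=1}^∞ |a_k| < ∞, and the functions θ ↦ Σ_{k=1}^∞ a_k·cos(kθ) and θ ↦ Σ_{k=1}^∞ a_k·sin(kθ) are well-defined and infinitely differentiable (C^∞) on all of ℝ. -/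
/-!
The terms of a convergent series tend to zero, and `cos² + sin² = 1` combines the two hypotheses
into `a k * ρ ^ k → 0`. Hence `|a k| = O(ρ⁻¹ ^ k)`, so `∑ |a k| * k ^ m < ∞` for every `m`. The
`m`-th derivative of `θ ↦ a k * cos (k * θ)` is bounded by `|a k| * k ^ m`, so the series may be
differentiated termwise to every order.
-/

open Real Filter Topology

open Asymptotics

theorem tendsto_atTop_zero_of_tendsto_sum_range {G : Type*} [AddCommGroup G]
    [TopologicalSpace G] [IsTopologicalAddGroup G] {f : ℕ → G} {S : G}
    (h : Tendsto (fun n => ∑ k ∈ Finset.range n, f k) atTop (𝓝 S)) :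
    Tendsto f atTop (𝓝 0) := by
  simpa only [Finset.sum_range_succ_sub_sum, sub_self] using
    ((tendsto_add_atTop_iff_nat 1).mpr h).sub h

theorem abs_le_abs_mul_cos_add_abs_mul_sin (b φ : ℝ) : |b| ≤ |b * cos φ| + |b * sin φ| := by
  rw [abs_mul, abs_mul, ← mul_add]
  refine le_mul_of_one_le_right (abs_nonneg b) ?_
  nlinarith [cos_sq_add_sin_sq φ, abs_cos_le_one φ, abs_sin_le_one φ, sq_abs (cos φ),
    sq_abs (sin φ), abs_nonneg (cos φ), abs_nonneg (sin φ)]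

theorem tendsto_zero_of_tendsto_mul_cos_of_tendsto_mul_sin {ι : Type*} {l : Filter ι}
    {b φ : ι → ℝ} (hc : Tendsto (fun i => b i * cos (φ i)) l (𝓝 0))
    (hs : Tendsto (fun i => b i * sin (φ i)) l (𝓝 0)) : Tendsto b l (𝓝 0) := by
  refine squeeze_zero_norm (fun i => abs_le_abs_mul_cos_add_abs_mul_sin (b i) (φ i)) ?_
  simpa using hc.abs.add hs.abs

theorem summable_abs_mul_pow_of_mul_pow_isBigO_one {a : ℕ → ℝ} {ρ : ℝ} (hρ : 1 < ρ)
    (h : (fun k => a k * ρ ^ k) =O[atTop] (fun _ => (1 : ℝ))) (m : ℕ) :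
    Summable fun k => |a k| * (k : ℝ) ^ m := by
  have hρ0 : ρ ≠ 0 := by positivity
  have hgeom : Summable fun k : ℕ => (k : ℝ) ^ m * ρ⁻¹ ^ k :=
    summable_pow_mul_geometric_of_norm_lt_one m
      (by rw [norm_inv, Real.norm_eq_abs, abs_of_pos (by positivity)]
          exact inv_lt_one_of_one_lt₀ hρ)
  have hO := h.mul (isBigO_refl (fun k : ℕ => (k : ℝ) ^ m * ρ⁻¹ ^ k) atTop)
  refine (summable_of_isBigO_nat (f := fun k => a k * (k : ℝ) ^ m) hgeom ?_).abs.congr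
    fun k => ?_
  · refine (hO.congr_left fun k => ?_).congr_right fun k => one_mul _
    rw [mul_mul_mul_comm, mul_comm (ρ ^ k), inv_pow, inv_mul_cancel₀ (pow_ne_zero k hρ0),
      mul_one]
  · simp [abs_mul]

theorem summable_mul_of_summable_abs {ι : Type*} {c g : ι → ℝ} (hc : Summable fun i => |c i|)
    (hg : ∀ i, |g i| ≤ 1) : Summable fun i => c i * g i :=
  hc.of_norm_bounded fun i => by
    rw [Real.norm_eq_abs, abs_mul]; exact mul_le_of_le_one_right (abs_nonneg _) (hg i)

open scoped ContDiff in
theorem contDiff_tsum_mul_comp_mul {f : ℝ → ℝ} {M : ℝ} (hf : ContDiff ℝ ∞ f)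
    (hbound : ∀ n x, |iteratedDeriv n f x| ≤ M) {c ξ : ℕ → ℝ}
    (hsum : ∀ m : ℕ, Summable fun k => |c k| * |ξ k| ^ m) :
    ContDiff ℝ ∞ fun θ => ∑' k, c k * f (ξ k * θ) := by
  refine contDiff_tsum (v := fun m k => M * (|c k| * |ξ k| ^ m))
    (fun k => contDiff_const.mul (hf.comp (contDiff_const.mul contDiff_id)))
    (fun m _ => (hsum m).mul_left M) fun m k x _ => ?_
  rw [norm_iteratedFDeriv_eq_norm_iteratedDeriv, iteratedDeriv_const_mul_field,
    iteratedDeriv_comp_const_mul (hf.of_le (by exact_mod_cast le_top)), Real.norm_eq_abs,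
    abs_mul, abs_mul, abs_pow]
  have := mul_le_mul_of_nonneg_left (hbound m (ξ k * x))
    (by positivity : 0 ≤ |c k| * |ξ k| ^ m)
  linarith

/-- Strong-convergence test: if both extended series `Σ a_k ρ^k cos(kθ₀)` and
`Σ a_k ρ^k sin(kθ₀)` converge at a single point with `ρ > 1`, then `Σ |a_k| < ∞`
and the trigonometric series `Σ a_k cos(kθ)` and `Σ a_k sin(kθ)` are well-defined
(convergent) and `C^∞` on all of `ℝ`. -/
theorem strong_convergence_test
    (a : ℕ → ℝ) (ρ : ℝ) (hρ : 1 < ρ) (θ₀ : ℝ)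
    (hc : ∃ S : ℝ, Tendsto
      (fun n : ℕ => ∑ k ∈ Finset.range n, a (k + 1) * ρ ^ (k + 1) * Real.cos ((k + 1) * θ₀))
      atTop (nhds S))
    (hs : ∃ S : ℝ, Tendsto
      (fun n : ℕ => ∑ k ∈ Finset.range n, a (k + 1) * ρ ^ (k + 1) * Real.sin ((k + 1) * θ₀))
      atTop (nhds S)) :
    Summable (fun k : ℕ => |a (k + 1)|) ∧
    (∀ θ : ℝ, Summable (fun k : ℕ => a (k + 1) * Real.cos ((k + 1) * θ))) ∧
    (∀ θ : ℝ, Summable (fun k : ℕ => a (k + 1) * Real.sin ((k + 1) * θ))) ∧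
    ContDiff ℝ (⊤ : ℕ∞)
      (fun θ : ℝ => ∑' k : ℕ, a (k + 1) * Real.cos ((k + 1) * θ)) ∧
    ContDiff ℝ (⊤ : ℕ∞)
      (fun θ : ℝ => ∑' k : ℕ, a (k + 1) * Real.sin ((k + 1) * θ)) := by
  obtain ⟨Sc, hSc⟩ := hc
  obtain ⟨Ss, hSs⟩ := hs
  have hdecay : Tendsto (fun k => a k * ρ ^ k) atTop (𝓝 0) :=
    (tendsto_add_atTop_iff_nat 1).mp <| tendsto_zero_of_tendsto_mul_cos_of_tendsto_mul_sin
      (tendsto_atTop_zero_of_tendsto_sum_range hSc)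
      (tendsto_atTop_zero_of_tendsto_sum_range hSs)
  have hweighted (m : ℕ) : Summable fun k : ℕ => |a (k + 1)| * |(k : ℝ) + 1| ^ m := by
    simpa [fun k : ℕ => abs_of_pos (Nat.cast_add_one_pos (α := ℝ) k)] using
      (summable_nat_add_iff 1).mpr
        (summable_abs_mul_pow_of_mul_pow_isBigO_one hρ (hdecay.isBigO_one ℝ) m)
  have habs : Summable fun k : ℕ => |a (k + 1)| := by simpa using hweighted 0
  exact ⟨habs, fun θ => summable_mul_of_summable_abs habs fun k => abs_cos_le_one _,
    fun θ => summable_mul_of_summable_abs habs fun k => abs_sin_le_one _,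
    contDiff_tsum_mul_comp_mul contDiff_cos abs_iteratedDeriv_cos_le_one hweighted,
    contDiff_tsum_mul_comp_mul contDiff_sin abs_iteratedDeriv_sin_le_one hweighted⟩
end

section
/- For every real ρ with 0 ≤ ρ < 1 and every real θ, the series Σ_{k=1}^∞ (−1)^{k+1}·ρ^k·sin(kθ)/k converges, and its sum equals arctan( ρ·sin(θ) / (1 + ρ·cos(θ)) ). Equivalently, the imaginary part of the principal-branch logarithm log(1 + ρ·e^{iθ}) equals arctan( ρ·sin(θ) / (1 + ρ·cos(θ)) ), and it has the stated power-series expansion. -/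
/-!
With `z = ρ e^{iθ}` we have `‖z‖ = ρ < 1`, so `log (1 + z)` is the sum of its Taylor series
`Σ (-1)^k z^{k+1}/(k+1)`, and taking imaginary parts gives the sine series because
`Im z^n = ρ^n sin (nθ)`. On the other hand `Re (1 + z) = 1 + ρ cos θ > 0`, so
`Im log (1 + z) = arg (1 + z)` lies in `(-π/2, π/2)` and is therefore the arctangent of
`Im (1 + z) / Re (1 + z)`.
-/

open Complex

namespace Complex

lemma hasSum_taylorSeries_log' {z : ℂ} (hz : ‖z‖ < 1) :
    HasSum (fun n : ℕ ↦ (-1) ^ n * z ^ (n + 1) / (n + 1)) (log (1 + z)) := by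
  have := (hasSum_nat_add_iff' 1).mpr (hasSum_taylorSeries_log hz)
  simpa [pow_succ] using this

lemma hasSum_im_log_one_add {z : ℂ} (hz : ‖z‖ < 1) :
    HasSum (fun n : ℕ ↦ (-1 : ℝ) ^ n * (z ^ (n + 1)).im / (n + 1)) (log (1 + z)).im := by
  convert hasSum_im (hasSum_taylorSeries_log' hz) using 1
  ext n
  rw [← ofReal_natCast, ← ofReal_one, ← ofReal_add, div_ofReal_im, ← ofReal_neg, ← ofReal_pow,
    im_ofReal_mul]

lemma log_im_eq_arctan {z : ℂ} (hz : 0 < z.re) : (log z).im = Real.arctan (z.im / z.re) := by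
  have hbound := abs_lt.mp (abs_arg_lt_pi_div_two_iff.mpr (Or.inl hz))
  rw [log_im, ← tan_arg, Real.arctan_tan hbound.1 hbound.2]

lemma im_ofReal_mul_exp_mul_I_pow (ρ θ : ℝ) (n : ℕ) :
    ((ρ * exp (θ * I)) ^ n).im = ρ ^ n * Real.sin (n * θ) := by
  rw [mul_pow, ← exp_nat_mul, ← mul_assoc, ← ofReal_pow, im_ofReal_mul]
  exact_mod_cast congrArg (ρ ^ n * ·) (exp_ofReal_mul_I_im (n * θ))

end Complex

/-- For `0 ≤ ρ < 1` and real `θ`, the series `Σ_{k=1}^∞ (−1)^{k+1} ρ^k sin(kθ)/k`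
converges to `arctan(ρ sin θ / (1 + ρ cos θ))`, which is also the imaginary part of
the principal-branch logarithm `log(1 + ρ e^{iθ})`. -/
theorem sawtooth_abel_sum
    (ρ : ℝ) (hρ0 : 0 ≤ ρ) (hρ1 : ρ < 1) (θ : ℝ) :
    HasSum (fun k : ℕ => (-1 : ℝ) ^ k * ρ ^ (k + 1) * Real.sin ((k + 1) * θ) / (k + 1))
      (Real.arctan (ρ * Real.sin θ / (1 + ρ * Real.cos θ))) ∧
    (Complex.log (1 + (ρ : ℂ) * Complex.exp (θ * Complex.I))).im =
      Real.arctan (ρ * Real.sin θ / (1 + ρ * Real.cos θ)) := by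
  set z : ℂ := ρ * exp (θ * I)
  have hz_norm : ‖z‖ < 1 := by simpa [z, abs_of_nonneg hρ0] using hρ1
  have hz_re : z.re = ρ * Real.cos θ := by simp [z, exp_ofReal_mul_I_re]
  have hz_im : z.im = ρ * Real.sin θ := by
    simpa only [pow_one, Nat.cast_one, one_mul] using im_ofReal_mul_exp_mul_I_pow ρ θ 1
  have h_re_pos : 0 < (1 + z).re := by
    rw [add_re, one_re, hz_re]
    nlinarith [Real.neg_one_le_cos θ]
  have h_log_im : (log (1 + z)).im = Real.arctan (ρ * Real.sin θ / (1 + ρ * Real.cos θ)) := by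
    rw [log_im_eq_arctan h_re_pos, add_re, add_im, one_re, one_im, hz_re, hz_im, zero_add]
  refine ⟨?_, h_log_im⟩
  rw [← h_log_im]
  convert hasSum_im_log_one_add hz_norm using 2 with n
  rw [im_ofReal_mul_exp_mul_I_pow]
  push_cast
  ring
end

section
/- For every real ρ with 0 ≤ ρ < 1 and every real θ, the series Σ_{j=0}^∞ ρ^{2j+1}·sin((2j+1)θ)/(2j+1) converges with sum (1/2)·arctan( 2ρ·sin(θ) / (1 − ρ²) ). Moreover, for every θ with 0 < θ < π, lim_{ρ → 1⁻} Σ_{j=0}^∞ ρ^{2j+1}·sin((2j+1)θ)/(2j+1) = π/4, and for −π < θ < 0 this limit equals −π/4; thus the radial limit recovers the standard unit-amplitude square wave (up to the factor 4/π). -/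
open Real Filter Topology

/-! For `z = ρ e^{iθ}` the series is the imaginary part of `∑ z^{2j+1}/(2j+1) = ½ log((1+z)/(1-z))`,
so its sum is `½ arg((1+z)/(1-z))`. Since `(1+z)(1-z̄) = 1 - |z|² + 2i Im z` has positive real
part, this argument is `arctan (2ρ sin θ / (1-ρ²))`, and as `ρ → 1⁻` the argument of `arctan`
tends to `±∞` according to the sign of `sin θ`. -/

namespace Complex

theorem hasSum_odd_pow_div_half_log {z : ℂ} (hz : ‖z‖ < 1) :
    HasSum (fun j : ℕ => z ^ (2 * j + 1) / ↑(2 * j + 1))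
      (1 / 2 * log ((1 + z) / (1 - z))) := by
  have h := (hasSum_arctan (z := -z * I) (by simpa using hz)).mul_left I
  have hterm (j : ℕ) : I * ((-1) ^ j * (-z * I) ^ (2 * j + 1)) = z ^ (2 * j + 1) := by
    have hsq : (-z * I) ^ 2 = -z ^ 2 := by rw [mul_pow, I_sq]; ring
    have hsign : ((-1 : ℂ) ^ j) ^ 2 = 1 := by rw [← pow_mul, mul_comm, pow_mul]; simp
    rw [pow_succ (-z * I), pow_mul (-z * I), hsq, neg_pow (z ^ 2)]
    linear_combination (-(z ^ 2) ^ j * z * I ^ 2) * hsign + (-(z ^ 2) ^ j * z) * I_sq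
  have hsum : I * arctan (-z * I) = 1 / 2 * log ((1 + z) / (1 - z)) := by
    rw [arctan, show -z * I * I = -(I * I) * z by ring, I_mul_I]
    ring_nf
    rw [I_sq]
    ring
  simpa only [mul_div_assoc', hterm, hsum] using h

theorem arg_eq_arctan_of_re_pos {w : ℂ} (hw : 0 < w.re) : arg w = Real.arctan (w.im / w.re) := by
  have h := abs_lt.mp (abs_arg_lt_pi_div_two_iff.mpr (Or.inl hw))
  rw [← tan_arg, Real.arctan_tan h.1 h.2]

theorem arg_one_add_div_one_sub {z : ℂ} (hz : ‖z‖ < 1) :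
    arg ((1 + z) / (1 - z)) = Real.arctan (2 * z.im / (1 - ‖z‖ ^ 2)) := by
  have hz1 : 1 - z ≠ 0 := by
    intro h
    simp [← sub_eq_zero.mp h] at hz
  have hpos : 0 < 1 - ‖z‖ ^ 2 := by nlinarith [norm_nonneg z]
  have hw : (1 + z) / (1 - z) = ((normSq (1 - z))⁻¹ : ℝ) * ⟨1 - ‖z‖ ^ 2, 2 * z.im⟩ := by
    rw [div_eq_mul_inv, inv_def, map_sub, map_one, ← mul_assoc, mul_comm]
    congr 1
    apply Complex.ext <;> simp [← normSq_eq_norm_sq, normSq_apply] <;> ring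
  rw [hw, arg_real_mul _ (inv_pos.mpr (normSq_pos.mpr hz1)), arg_eq_arctan_of_re_pos hpos]

end Complex

theorem hasSum_pow_mul_sin_odd_div {ρ : ℝ} (hρ : |ρ| < 1) (θ : ℝ) :
    HasSum (fun j : ℕ => ρ ^ (2 * j + 1) * sin ((2 * j + 1) * θ) / (2 * j + 1))
      (1 / 2 * arctan (2 * ρ * sin θ / (1 - ρ ^ 2))) := by
  set z : ℂ := ρ * (Complex.cos θ + Complex.sin θ * Complex.I)
  have hnorm : ‖z‖ = |ρ| := by simp [z, Complex.norm_real]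
  have him (n : ℕ) : (z ^ n).im = ρ ^ n * sin (n * θ) := by
    rw [mul_pow, Complex.cos_add_sin_mul_I_pow, ← Complex.ofReal_pow, Complex.im_ofReal_mul,
      ← Complex.ofReal_natCast, ← Complex.ofReal_mul]
    simp only [Complex.add_im, Complex.cos_ofReal_im, Complex.mul_im, Complex.sin_ofReal_re,
      Complex.sin_ofReal_im, Complex.I_re, Complex.I_im]
    ring
  have hterm (j : ℕ) : (z ^ (2 * j + 1) / ↑(2 * j + 1)).im
      = ρ ^ (2 * j + 1) * sin ((2 * j + 1) * θ) / (2 * j + 1) := by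
    rw [Complex.div_natCast_im, him]
    push_cast
    rfl
  have hsum : (1 / 2 * Complex.log ((1 + z) / (1 - z))).im
      = 1 / 2 * arctan (2 * ρ * sin θ / (1 - ρ ^ 2)) := by
    rw [show (1 / 2 : ℂ) = ((1 / 2 : ℝ) : ℂ) by push_cast; rfl, Complex.im_ofReal_mul,
      Complex.log_im, Complex.arg_one_add_div_one_sub (hnorm ▸ hρ), hnorm, sq_abs,
      mul_assoc, show z.im = ρ * sin θ by simpa using him 1]
  have h := Complex.hasSum_im (Complex.hasSum_odd_pow_div_half_log (hnorm ▸ hρ))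
  rw [hsum] at h
  exact h.congr_fun fun j => (hterm j).symm

theorem tendsto_arctan_two_mul_div_one_sub_sq {c : ℝ} (hc : 0 < c) :
    Tendsto (fun ρ : ℝ => arctan (2 * ρ * c / (1 - ρ ^ 2))) (𝓝[<] 1) (𝓝 (π / 2)) := by
  have hnum : Tendsto (fun ρ : ℝ => 2 * ρ * c) (𝓝[<] 1) (𝓝 (2 * 1 * c)) :=
    (Continuous.tendsto (by fun_prop) 1).mono_left nhdsWithin_le_nhds
  have hden : Tendsto (fun ρ : ℝ => 1 - ρ ^ 2) (𝓝[<] 1) (𝓝[>] 0) := by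
    refine tendsto_nhdsWithin_of_tendsto_nhds_of_eventually_within _ ?_ ?_
    · simpa using (Continuous.tendsto (by fun_prop : Continuous fun ρ : ℝ => 1 - ρ ^ 2) 1).mono_left
        nhdsWithin_le_nhds
    · filter_upwards [Ioo_mem_nhdsLT (show (0 : ℝ) < 1 by norm_num)] with ρ hρ
      simp only [Set.mem_Ioi, sub_pos]
      nlinarith [hρ.1, hρ.2]
  simp_rw [div_eq_mul_inv]
  exact (tendsto_arctan_atTop.mono_right nhdsWithin_le_nhds).comp
    (hnum.pos_mul_atTop (by positivity) hden.inv_tendsto_nhdsGT_zero)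

/-- The square-wave series: for `0 ≤ ρ < 1` and every real `θ`, the series
`Σ_{j=0}^∞ ρ^{2j+1} sin((2j+1)θ)/(2j+1)` converges with sum
`(1/2) arctan(2ρ sin θ / (1 − ρ²))`; moreover its radial limit as `ρ → 1⁻`
(within `(0,1)`) is `π/4` for `0 < θ < π` and `−π/4` for `−π < θ < 0`. -/
theorem square_wave_abel_sum_and_limit :
    (∀ ρ : ℝ, 0 ≤ ρ → ρ < 1 → ∀ θ : ℝ,
      HasSum (fun j : ℕ => ρ ^ (2 * j + 1) * Real.sin ((2 * j + 1) * θ) / (2 * j + 1))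
        ((1 / 2) * Real.arctan (2 * ρ * Real.sin θ / (1 - ρ ^ 2)))) ∧
    (∀ θ : ℝ, 0 < θ → θ < Real.pi →
      Tendsto (fun ρ : ℝ =>
          ∑' j : ℕ, ρ ^ (2 * j + 1) * Real.sin ((2 * j + 1) * θ) / (2 * j + 1))
        (nhdsWithin 1 (Set.Ioo (0 : ℝ) 1)) (nhds (Real.pi / 4))) ∧
    (∀ θ : ℝ, -Real.pi < θ → θ < 0 →
      Tendsto (fun ρ : ℝ =>
          ∑' j : ℕ, ρ ^ (2 * j + 1) * Real.sin ((2 * j + 1) * θ) / (2 * j + 1))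
        (nhdsWithin 1 (Set.Ioo (0 : ℝ) 1)) (nhds (-(Real.pi / 4)))) := by
  have hsum (ρ : ℝ) (h0 : 0 ≤ ρ) (h1 : ρ < 1) :=
    hasSum_pow_mul_sin_odd_div (abs_lt.mpr ⟨by linarith, h1⟩)
  have hpos (θ : ℝ) (h0 : 0 < θ) (hπ : θ < π) : Tendsto (fun ρ : ℝ =>
      ∑' j : ℕ, ρ ^ (2 * j + 1) * sin ((2 * j + 1) * θ) / (2 * j + 1))
        (𝓝[Set.Ioo 0 1] 1) (𝓝 (π / 4)) := by
    have hlim : Tendsto (fun ρ : ℝ => 1 / 2 * arctan (2 * ρ * sin θ / (1 - ρ ^ 2)))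
        (𝓝[Set.Ioo 0 1] 1) (𝓝 (π / 4)) := by
      rw [show π / 4 = 1 / 2 * (π / 2) by ring]
      exact ((tendsto_arctan_two_mul_div_one_sub_sq (sin_pos_of_pos_of_lt_pi h0 hπ)).mono_left
        (nhdsWithin_mono _ Set.Ioo_subset_Iio_self)).const_mul _
    refine hlim.congr' ?_
    filter_upwards [self_mem_nhdsWithin] with ρ hρ
    exact ((hsum ρ hρ.1.le hρ.2 θ).tsum_eq).symm
  refine ⟨hsum, hpos, fun θ hπ h0 => ?_⟩
  -- the series is odd in `θ`
  simpa [mul_neg, sin_neg, neg_div, tsum_neg] using (hpos (-θ) (by linarith) (by linarith)).neg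
end
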